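/- arXiv:2510.20902 — 2 statements merged into one kernel-verified Lean document; each statement's English description precedes it below -/
import Mathlib

section
/- For every real α with 0 < α and every real a, ∫_{-∞}^{∞} e^{-i a T} / (cosh T)^{2α} dT = 2^{2α-1} · Γ(α - i a/2) · Γ(α + i a/2) / Γ(2α). -/
open MeasureTheory Real Complex

namespace Stmt4Aux

noncomputable def f (x : ℝ) : ℝ := (Real.log x - Real.log (1 - x)) / 2

lemma f_image : f '' Set.Ioo 0 1 = Set.univ := by
  ext T
  simp only [Set.mem_image, Set.mem_univ, iff_true]
  refine ⟨Real.exp (2 * T) / (1 + Real.exp (2 * T)), ?_, ?_⟩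
  · have h1 : (0:ℝ) < Real.exp (2 * T) := Real.exp_pos _
    constructor
    · positivity
    · rw [div_lt_one (by positivity)]; linarith
  · have h1 : (0:ℝ) < Real.exp (2 * T) := Real.exp_pos _
    have h2 : (0:ℝ) < 1 + Real.exp (2 * T) := by positivity
    have h3 : 1 - Real.exp (2 * T) / (1 + Real.exp (2 * T)) = 1 / (1 + Real.exp (2 * T)) := by
      field_simp
      ring
    unfold f
    rw [h3, Real.log_div h1.ne' h2.ne', Real.log_div one_ne_zero h2.ne', Real.log_exp,
      Real.log_one]
    ring

lemma f_hasDerivAt {x : ℝ} (hx : x ∈ Set.Ioo (0:ℝ) 1) :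
    HasDerivAt f (1 / (2 * x * (1 - x))) x := by
  obtain ⟨hx0, hx1⟩ := hx
  have h1x : (0:ℝ) < 1 - x := by linarith
  have hlog : HasDerivAt Real.log x⁻¹ x := Real.hasDerivAt_log hx0.ne'
  have hsub : HasDerivAt (fun y : ℝ => 1 - y) (-1) x := by
    simpa using (hasDerivAt_id x).const_sub 1
  have hlog2 : HasDerivAt (fun y : ℝ => Real.log (1 - y)) ((1 - x)⁻¹ * (-1)) x :=
    (Real.hasDerivAt_log h1x.ne').comp x hsub
  have := ((hlog.sub hlog2).div_const 2)
  refine this.congr_deriv ?_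
  field_simp [hx0.ne', h1x.ne']
  ring

lemma f_injOn : Set.InjOn f (Set.Ioo 0 1) := by
  have : StrictMonoOn f (Set.Ioo 0 1) := by
    intro x hx y hy hxy
    have h1 : Real.log x < Real.log y := Real.log_lt_log hx.1 hxy
    have h2 : Real.log (1 - y) < Real.log (1 - x) :=
      Real.log_lt_log (by linarith [hy.2]) (by linarith)
    unfold f; linarith
  exact this.injOn

end Stmt4Aux

open Stmt4Aux in
/-- `∫ e^{-iaT} / (cosh T)^{2α} dT = 2^{2α-1} Γ(α - ia/2) Γ(α + ia/2) / Γ(2α)`. -/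
theorem stmt_4 (α a : ℝ) (hα : 0 < α) :
    (∫ T : ℝ, Complex.exp (-Complex.I * a * T) / ((Real.cosh T ^ (2 * α) : ℝ) : ℂ))
      = (2 : ℂ) ^ ((2 * α - 1 : ℝ) : ℂ) *
        Complex.Gamma (α - Complex.I * a / 2) * Complex.Gamma (α + Complex.I * a / 2) /
        Complex.Gamma (2 * α) := by
  set u : ℂ := (α : ℂ) - Complex.I * a / 2 with hu
  set v : ℂ := (α : ℂ) + Complex.I * a / 2 with hv
  set g : ℝ → ℂ := fun T => Complex.exp (-Complex.I * a * T) / ((Real.cosh T ^ (2 * α) : ℝ) : ℂ)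
    with hg
  -- Step 1: change of variables
  have step1 : (∫ T : ℝ, g T)
      = ∫ x in Set.Ioo (0:ℝ) 1, |1 / (2 * x * (1 - x))| • g (f x) := by
    rw [← MeasureTheory.setIntegral_univ, ← f_image]
    exact MeasureTheory.integral_image_eq_integral_abs_deriv_smul measurableSet_Ioo
      (fun x hx => (f_hasDerivAt hx).hasDerivWithinAt) f_injOn g
  -- Step 2: pointwise identification with the Beta integrand
  have step2 : ∀ x ∈ Set.Ioo (0:ℝ) 1,
      |1 / (2 * x * (1 - x))| • g (f x)
        = (2 : ℂ) ^ ((2 * α - 1 : ℝ) : ℂ) * ((x:ℂ) ^ (u - 1) * (1 - (x:ℂ)) ^ (v - 1)) := by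
    intro x hx
    obtain ⟨hx0, hx1⟩ := hx
    have h1x : (0:ℝ) < 1 - x := by linarith
    set L := Real.log x with hL
    set M := Real.log (1 - x) with hM
    set K := Real.log 2 with hK
    -- cosh (f x) as an exponential
    have hcosh : Real.cosh (f x) = Real.exp (-(K + L / 2 + M / 2)) := by
      have hfx : f x = L / 2 - M / 2 := by unfold f; ring
      rw [Real.cosh_eq, hfx]
      have hp : Real.exp (L / 2) ^ 2 = x := by
        rw [sq, ← Real.exp_add]
        have : L / 2 + L / 2 = L := by ring
        rw [this, hL, Real.exp_log hx0]
      have hq : Real.exp (M / 2) ^ 2 = 1 - x := by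
        rw [sq, ← Real.exp_add]
        have : M / 2 + M / 2 = M := by ring
        rw [this, hM, Real.exp_log h1x]
      have hpq : Real.exp (L / 2) ^ 2 + Real.exp (M / 2) ^ 2 = 1 := by rw [hp, hq]; ring
      have hep : (0:ℝ) < Real.exp (L / 2) := Real.exp_pos _
      have heq : (0:ℝ) < Real.exp (M / 2) := Real.exp_pos _
      rw [Real.exp_sub, neg_sub, Real.exp_sub, Real.exp_neg, Real.exp_add, Real.exp_add,
        hK, Real.exp_log two_pos]
      field_simp
      linear_combination hpq
    -- cosh (f x) ^ (2α) as an exponential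
    have hcosh2 : Real.cosh (f x) ^ (2 * α) = Real.exp (-(K + L / 2 + M / 2) * (2 * α)) := by
      rw [hcosh, ← Real.exp_log (Real.exp_pos (-(K + L / 2 + M / 2))), Real.log_exp,
        Real.rpow_def_of_pos (Real.exp_pos _), Real.log_exp]
    -- the prefactor as an exponential
    have hpre : |1 / (2 * x * (1 - x))| = Real.exp (-(K + L + M)) := by
      rw [abs_of_pos (by positivity)]
      rw [Real.exp_neg, Real.exp_add, Real.exp_add, hK, hL, hM, Real.exp_log two_pos,
        Real.exp_log hx0, Real.exp_log h1x]
      rw [one_div]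
    -- complex powers as exponentials
    have hxc : (x:ℂ) ^ (u - 1) = Complex.exp ((L:ℂ) * (u - 1)) := by
      rw [Complex.cpow_def_of_ne_zero (by exact_mod_cast hx0.ne'), ← Complex.ofReal_log hx0.le]
    have h1xc : (1 - (x:ℂ)) ^ (v - 1) = Complex.exp ((M:ℂ) * (v - 1)) := by
      have : (1 - (x:ℂ)) = ((1 - x : ℝ) : ℂ) := by push_cast; ring
      rw [this, Complex.cpow_def_of_ne_zero (by exact_mod_cast h1x.ne'),
        ← Complex.ofReal_log h1x.le]
    have h2c : (2 : ℂ) ^ ((2 * α - 1 : ℝ) : ℂ) = Complex.exp ((K:ℂ) * (2 * α - 1)) := by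
      rw [show (2:ℂ) = ((2:ℝ):ℂ) from by norm_num,
        Complex.cpow_def_of_ne_zero (by norm_num), ← Complex.ofReal_log (by norm_num : (0:ℝ) ≤ 2)]
      push_cast
      rw [hK]
    -- put everything together
    rw [hg]
    simp only []
    rw [hcosh2, hpre]
    have hfxc : ((f x : ℝ) : ℂ) = ((L:ℂ) - M) / 2 := by
      unfold f; push_cast; ring
    rw [hxc, h1xc, h2c, hfxc]
    rw [Complex.real_smul, Complex.ofReal_exp, Complex.ofReal_exp]
    rw [div_eq_mul_inv, ← Complex.exp_neg, ← Complex.exp_add, ← Complex.exp_add,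
      ← Complex.exp_add, ← Complex.exp_add]
    congr 1
    rw [hu, hv]
    push_cast
    ring
  -- Step 3: evaluate via the Beta function
  have hbeta : Complex.betaIntegral u v
      = ∫ x in Set.Ioo (0:ℝ) 1, (x:ℂ) ^ (u - 1) * (1 - (x:ℂ)) ^ (v - 1) := by
    rw [Complex.betaIntegral, intervalIntegral.integral_of_le zero_le_one,
      MeasureTheory.integral_Ioc_eq_integral_Ioo]
  have hure : 0 < u.re := by
    rw [hu]
    simp [Complex.div_re]
    exact hα
  have hvre : 0 < v.re := by
    rw [hv]
    simp [Complex.div_re]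
    exact hα
  have huv : u + v = 2 * (α:ℂ) := by rw [hu, hv]; ring
  have hG : Complex.Gamma u * Complex.Gamma v
      = Complex.Gamma (2 * (α:ℂ)) * Complex.betaIntegral u v := by
    rw [← huv]
    exact Complex.Gamma_mul_Gamma_eq_betaIntegral hure hvre
  have hne : Complex.Gamma (2 * (α:ℂ)) ≠ 0 := by
    apply Complex.Gamma_ne_zero
    intro m hm
    have := congrArg Complex.re hm
    simp at this
    have hm0 : (0:ℝ) ≤ (m:ℝ) := Nat.cast_nonneg m
    linarith
  have hbval : Complex.betaIntegral u v
      = Complex.Gamma u * Complex.Gamma v / Complex.Gamma (2 * (α:ℂ)) := by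
    rw [hG, mul_div_cancel_left₀ _ hne]
  calc (∫ T : ℝ, g T)
      = ∫ x in Set.Ioo (0:ℝ) 1, |1 / (2 * x * (1 - x))| • g (f x) := step1
    _ = ∫ x in Set.Ioo (0:ℝ) 1,
          (2 : ℂ) ^ ((2 * α - 1 : ℝ) : ℂ) * ((x:ℂ) ^ (u - 1) * (1 - (x:ℂ)) ^ (v - 1)) :=
        MeasureTheory.setIntegral_congr_fun measurableSet_Ioo step2
    _ = (2 : ℂ) ^ ((2 * α - 1 : ℝ) : ℂ)
          * ∫ x in Set.Ioo (0:ℝ) 1, (x:ℂ) ^ (u - 1) * (1 - (x:ℂ)) ^ (v - 1) :=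
        MeasureTheory.integral_const_mul _ _
    _ = (2 : ℂ) ^ ((2 * α - 1 : ℝ) : ℂ) * Complex.betaIntegral u v := by rw [← hbeta]
    _ = (2 : ℂ) ^ ((2 * α - 1 : ℝ) : ℂ) * Complex.Gamma u * Complex.Gamma v
          / Complex.Gamma (2 * (α:ℂ)) := by rw [hbval]; ring
end

section
/- Fix β > 0 and Δ ∈ ℝ with 0 < Δ < 1/2. The function ρ(ω) = cosh(βω/2) · |Γ(Δ + i ωβ/(2π))|² satisfies: there exist constants c₁, c₂ > 0 and Ω > 0 such that c₁|ω|^{2Δ-1} ≤ ρ(ω) ≤ c₂|ω|^{2Δ-1} for all |ω| ≥ Ω. In particular ρ decays polynomially (not exponentially) at large |ω|. -/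
open Real Complex

open Filter Topology

noncomputable def sykG (y t : ℝ) : ℝ := Real.log (t^2 + y^2) - 2 * Real.log t

lemma sykG_hasDerivAt (y t : ℝ) (ht : 0 < t) :
    HasDerivAt (sykG y) (2*t/(t^2+y^2) - 2/t) t := by
  have h1 : HasDerivAt (fun u : ℝ => u^2 + y^2) (2*t) t := by
    simpa using ((hasDerivAt_pow 2 t).add_const (y^2))
  have h2 : HasDerivAt (fun u : ℝ => Real.log (u^2+y^2)) (2*t/(t^2+y^2)) t :=
    h1.log (by positivity)
  have h3 : HasDerivAt (fun u : ℝ => 2 * Real.log u) (2/t) t := by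
    simpa [div_eq_mul_inv, mul_comm] using (Real.hasDerivAt_log ht.ne').const_mul 2
  exact h2.sub h3

lemma sykG_convex (y : ℝ) : ConvexOn ℝ (Set.Ioi (0:ℝ)) (sykG y) := by
  have hderiv : ∀ t ∈ Set.Ioi (0:ℝ), deriv (sykG y) t = 2*t/(t^2+y^2) - 2/t :=
    fun t ht => (sykG_hasDerivAt y t ht).deriv
  apply MonotoneOn.convexOn_of_deriv (convex_Ioi 0)
  · intro t ht
    exact (sykG_hasDerivAt y t ht).continuousAt.continuousWithinAt
  · rw [interior_Ioi]
    intro t ht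
    exact (sykG_hasDerivAt y t ht).differentiableAt.differentiableWithinAt
  · rw [interior_Ioi]
    intro a ha b hb hab
    rw [hderiv a ha, hderiv b hb]
    have ha' : (0:ℝ) < a := ha
    have hb' : (0:ℝ) < b := hb
    have key : ∀ t : ℝ, 0 < t → 2*t/(t^2+y^2) - 2/t = -(2*y^2/(t*(t^2+y^2))) := by
      intro t ht; field_simp; ring
    rw [key a ha', key b hb']
    have h1 : 2*y^2/(b*(b^2+y^2)) ≤ 2*y^2/(a*(a^2+y^2)) := by
      apply div_le_div_of_nonneg_left (by positivity) (by positivity)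
      nlinarith [pow_le_pow_left₀ ha'.le hab 2, mul_le_mul_of_nonneg_right hab (sq_nonneg y), mul_le_mul (le_refl b) (pow_le_pow_left₀ ha'.le hab 2) (by positivity) hb'.le]
    linarith

lemma sykG_nonneg (y t : ℝ) (ht : 0 < t) : 0 ≤ sykG y t := by
  have : Real.log (t^2) ≤ Real.log (t^2 + y^2) :=
    Real.log_le_log (by positivity) (by nlinarith [sq_nonneg y])
  rw [Real.log_pow] at this
  simp only [sykG]
  push_cast at this ⊢
  linarith

lemma syk_term_upper (Δ y : ℝ) (hΔ0 : 0 < Δ) (hΔ1 : Δ < 1/2) (k : ℕ) :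
    sykG y ((k:ℝ)+1+Δ) - sykG y ((k:ℝ)+1+1/2)
      ≤ ((1-2*Δ)/2) * (sykG y ((k:ℝ)+1/2) - sykG y ((k:ℝ)+1+1/2)) := by
  have hconv := sykG_convex y
  have hx1 : ((k:ℝ)+1) ∈ Set.Ioi (0:ℝ) := by simp; positivity
  have hx2 : ((k:ℝ)+1+1/2) ∈ Set.Ioi (0:ℝ) := by simp; positivity
  have hx3 : ((k:ℝ)+1/2) ∈ Set.Ioi (0:ℝ) := by simp; positivity
  have i1 := hconv.2 hx1 hx2 (by linarith : (0:ℝ) ≤ 1-2*Δ) (by linarith : (0:ℝ) ≤ 2*Δ)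
    (by ring : (1-2*Δ) + 2*Δ = 1)
  rw [smul_eq_mul, smul_eq_mul,
    (by ring : (1-2*Δ) * ((k:ℝ)+1) + (2*Δ) * ((k:ℝ)+1+1/2) = (k:ℝ)+1+Δ)] at i1
  have i2 := hconv.2 hx3 hx2 (by norm_num : (0:ℝ) ≤ 1/2) (by norm_num : (0:ℝ) ≤ 1/2)
    (by norm_num : (1:ℝ)/2 + 1/2 = 1)
  rw [smul_eq_mul, smul_eq_mul,
    (by ring : (1:ℝ)/2 * ((k:ℝ)+1/2) + (1:ℝ)/2 * ((k:ℝ)+1+1/2) = (k:ℝ)+1)] at i2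
  simp only [smul_eq_mul] at i1 i2
  nlinarith [i1, i2]

lemma syk_term_lower (Δ y : ℝ) (hΔ0 : 0 < Δ) (hΔ1 : Δ < 1/2) (j : ℕ) :
    ((1-2*Δ)/2) * (sykG y ((j:ℝ)+1) - sykG y ((j:ℝ)+1+1))
      ≤ sykG y ((j:ℝ)+Δ) - sykG y ((j:ℝ)+1/2) := by
  have hconv := sykG_convex y
  have h1Δ : (0:ℝ) < 1 - Δ := by linarith
  set lam : ℝ := 1/(2*(1-Δ)) with hlam
  have hlam0 : 0 ≤ lam := by positivity
  have hlam1 : 0 ≤ 1 - lam := by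
    rw [hlam]
    rw [sub_nonneg, div_le_one (by linarith)]
    linarith
  have hxΔ : ((j:ℝ)+Δ) ∈ Set.Ioi (0:ℝ) := by simp; positivity
  have hx1 : ((j:ℝ)+1) ∈ Set.Ioi (0:ℝ) := by simp; positivity
  have hx2 : ((j:ℝ)+1+1) ∈ Set.Ioi (0:ℝ) := by simp; positivity
  -- i3 : g(j+1/2) ≤ lam g(j+Δ) + (1-lam) g(j+1)
  have i3 := hconv.2 hxΔ hx1 hlam0 hlam1 (by ring : lam + (1 - lam) = 1)
  rw [smul_eq_mul, smul_eq_mul,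
    (show lam * ((j:ℝ)+Δ) + (1-lam) * ((j:ℝ)+1) = (j:ℝ)+1/2 by
      rw [hlam]; field_simp; ring)] at i3
  -- i4 : slope
  have i4 := hconv.slope_mono_adjacent hxΔ hx2
    (by linarith : (j:ℝ)+Δ < (j:ℝ)+1) (by linarith : (j:ℝ)+1 < (j:ℝ)+1+1)
  rw [(by ring : ((j:ℝ)+1) - ((j:ℝ)+Δ) = 1-Δ), (by ring : ((j:ℝ)+1+1) - ((j:ℝ)+1) = 1)] at i4
  rw [div_le_iff₀ h1Δ, div_one] at i4
  -- combine
  have hB : (1-Δ) * (sykG y ((j:ℝ)+1) - sykG y ((j:ℝ)+1+1))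
      ≤ sykG y ((j:ℝ)+Δ) - sykG y ((j:ℝ)+1) := by nlinarith [i4]
  have hC := mul_le_mul_of_nonneg_left hB hlam1
  have hA : (1-lam) * (sykG y ((j:ℝ)+Δ) - sykG y ((j:ℝ)+1))
      ≤ sykG y ((j:ℝ)+Δ) - sykG y ((j:ℝ)+1/2) := by
    simp only [smul_eq_mul] at i3
    nlinarith [i3]
  have hid : (1-lam) * (1-Δ) = (1-2*Δ)/2 := by
    rw [hlam]; field_simp; ring
  calc ((1-2*Δ)/2) * (sykG y ((j:ℝ)+1) - sykG y ((j:ℝ)+1+1))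
      = (1-lam) * ((1-Δ) * (sykG y ((j:ℝ)+1) - sykG y ((j:ℝ)+1+1))) := by
        rw [← mul_assoc, hid]
    _ ≤ (1-lam) * (sykG y ((j:ℝ)+Δ) - sykG y ((j:ℝ)+1)) := hC
    _ ≤ _ := hA

lemma syk_sum_upper (Δ y : ℝ) (hΔ0 : 0 < Δ) (hΔ1 : Δ < 1/2) (n : ℕ) :
    ∑ j ∈ Finset.range (n+1), (sykG y ((j:ℝ)+Δ) - sykG y ((j:ℝ)+1/2))
      ≤ (sykG y Δ - sykG y (1/2)) + ((1-2*Δ)/2) * sykG y (1/2) := by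
  rw [Finset.sum_range_succ']
  have h0 : sykG y (((0:ℕ):ℝ)+Δ) - sykG y (((0:ℕ):ℝ)+1/2) = sykG y Δ - sykG y (1/2) := by
    norm_num
  rw [h0]
  have hsum : ∑ i ∈ Finset.range n, (sykG y ((((i+1:ℕ)):ℝ)+Δ) - sykG y ((((i+1:ℕ)):ℝ)+1/2))
      ≤ ∑ i ∈ Finset.range n, ((1-2*Δ)/2) *
        ((fun k : ℕ => sykG y ((k:ℝ)+1/2)) i - (fun k : ℕ => sykG y ((k:ℝ)+1/2)) (i+1)) := by
    apply Finset.sum_le_sum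
    intro i _
    have := syk_term_upper Δ y hΔ0 hΔ1 i
    push_cast
    push_cast at this
    convert this using 3 <;> ring
  rw [← Finset.mul_sum, Finset.sum_range_sub' (fun k : ℕ => sykG y ((k:ℝ)+1/2)) n] at hsum
  have hGn : 0 ≤ sykG y ((n:ℝ)+1/2) := sykG_nonneg y _ (by positivity)
  have hc : (0:ℝ) ≤ (1-2*Δ)/2 := by linarith
  have h12 : sykG y (((0:ℕ):ℝ)+1/2) = sykG y (1/2) := by norm_num
  rw [h12] at hsum
  nlinarith [hsum]

lemma syk_sum_lower (Δ y : ℝ) (hΔ0 : 0 < Δ) (hΔ1 : Δ < 1/2) (n : ℕ) :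
    ((1-2*Δ)/2) * (sykG y 1 - sykG y ((n:ℝ)+2))
      ≤ ∑ j ∈ Finset.range (n+1), (sykG y ((j:ℝ)+Δ) - sykG y ((j:ℝ)+1/2)) := by
  have hsum : ∑ j ∈ Finset.range (n+1), ((1-2*Δ)/2) *
      ((fun k : ℕ => sykG y ((k:ℝ)+1)) j - (fun k : ℕ => sykG y ((k:ℝ)+1)) (j+1))
      ≤ ∑ j ∈ Finset.range (n+1), (sykG y ((j:ℝ)+Δ) - sykG y ((j:ℝ)+1/2)) := by
    apply Finset.sum_le_sum
    intro j _
    have := syk_term_lower Δ y hΔ0 hΔ1 j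
    push_cast
    convert this using 3 <;> push_cast <;> ring
  rw [← Finset.mul_sum, Finset.sum_range_sub' (fun k : ℕ => sykG y ((k:ℝ)+1)) (n+1)] at hsum
  have h1 : (((0:ℕ):ℝ)+1) = (1:ℝ) := by norm_num
  have h2 : (((n+1:ℕ)):ℝ)+1 = (n:ℝ)+2 := by push_cast; ring
  rw [h1, h2] at hsum
  exact hsum

lemma syk_abs_Gamma_half (y : ℝ) :
    ‖Complex.Gamma ((1/2 : ℂ) + Complex.I * y)‖^2 = π / Real.cosh (π * y) := by
  set z : ℂ := (1/2 : ℂ) + Complex.I * y with hz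
  have h1 : (1 : ℂ) - z = (starRingEnd ℂ) z := by
    simp [hz, Complex.ext_iff]
    norm_num
  have href := Complex.Gamma_mul_Gamma_one_sub z
  rw [h1, Complex.Gamma_conj, Complex.mul_conj] at href
  have hπz : (π : ℂ) * z = ((π * y : ℝ) : ℂ) * Complex.I + (π : ℂ) / 2 := by
    rw [hz]; push_cast; ring
  rw [hπz, Complex.sin_add_pi_div_two, Complex.cos_mul_I, ← Complex.ofReal_cosh] at href
  have hcosh : (0:ℝ) < Real.cosh (π * y) := Real.cosh_pos _
  have : ((Complex.normSq (Complex.Gamma z) : ℝ) : ℂ) = ((π / Real.cosh (π*y) : ℝ) : ℂ) := by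
    rw [href]; push_cast; ring
  have h2 := Complex.ofReal_inj.mp this
  rw [← Complex.sq_norm] at h2
  exact h2

lemma syk_absSq_GammaSeq (s : ℂ) (n : ℕ) (hn : 1 ≤ n) :
    ‖Complex.GammaSeq s n‖^2
      = ((n:ℝ) ^ s.re * (n.factorial:ℝ))^2
        / ∏ j ∈ Finset.range (n+1), Complex.normSq (s + j) := by
  have hn' : (0:ℝ) < (n:ℝ) := by exact_mod_cast hn
  rw [Complex.GammaSeq, norm_div, norm_mul]
  rw [show ((n:ℕ):ℂ) = (((n:ℝ)):ℂ) by push_cast; rfl,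
    Complex.norm_cpow_eq_rpow_re_of_pos hn']
  rw [norm_prod]
  rw [div_pow, mul_pow, ← Finset.prod_pow]
  congr 1
  · rw [Complex.norm_natCast]; ring
  · exact Finset.prod_congr rfl fun j _ => Complex.sq_norm _

lemma syk_tendsto (Δ y : ℝ) (hΔ0 : 0 < Δ) (hΔ1 : Δ < 1/2) :
    Tendsto (fun n : ℕ => ∏ j ∈ Finset.range (n+1),
      ((((j:ℝ)+1/2)^2+y^2) * (((j:ℝ)+Δ)^2) / (((((j:ℝ)+Δ)^2+y^2)) * (((j:ℝ)+1/2)^2))))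
      atTop (𝓝 (Real.cosh (π*y) * ‖Complex.Gamma (↑Δ + Complex.I*↑y)‖^2
        / (Real.Gamma Δ)^2)) := by
  set z₁ : ℂ := ↑Δ + Complex.I*↑y with hz₁
  set z₂ : ℂ := (1/2:ℂ) + Complex.I*↑y with hz₂
  have e₁ : ∀ j : ℕ, Complex.normSq (z₁ + j) = (((j:ℝ)+Δ)^2+y^2) := by
    intro j
    simp [hz₁, Complex.normSq_apply]
    ring
  have e₂ : ∀ j : ℕ, Complex.normSq (z₂ + j) = (((j:ℝ)+1/2)^2+y^2) := by
    intro j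
    simp [hz₂, Complex.normSq_apply]
    ring
  have e₃ : ∀ j : ℕ, Complex.normSq ((↑Δ:ℂ) + j) = (((j:ℝ)+Δ)^2) := by
    intro j
    simp [Complex.normSq_apply]
    ring
  have e₄ : ∀ j : ℕ, Complex.normSq ((1/2:ℂ) + j) = (((j:ℝ)+1/2)^2) := by
    intro j
    simp [Complex.normSq_apply]
    ring
  have hAlim : ∀ s : ℂ, Tendsto (fun n => ‖Complex.GammaSeq s n‖^2) atTop
      (𝓝 (‖Complex.Gamma s‖^2)) := fun s =>
    ((continuous_norm.tendsto _).comp (Complex.GammaSeq_tendsto_Gamma s)).pow 2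
  have hΓΔpos : 0 < Real.Gamma Δ := Real.Gamma_pos_of_pos hΔ0
  have hz₂ne : Complex.Gamma z₂ ≠ 0 := by
    apply Complex.Gamma_ne_zero
    intro m hm
    have := congrArg Complex.re hm
    simp [hz₂] at this
    have h0 : (0:ℝ) ≤ (m:ℝ) := m.cast_nonneg
    linarith
  have hwΔ : ‖Complex.Gamma (↑Δ:ℂ)‖ = Real.Gamma Δ := by
    rw [Complex.Gamma_ofReal, Complex.norm_real, Real.norm_eq_abs, abs_of_pos hΓΔpos]
  have hw2 : ‖Complex.Gamma ((1/2:ℂ))‖^2 = π := by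
    rw [show ((1/2:ℂ)) = (((1/2:ℝ)):ℂ) by norm_num, Complex.Gamma_ofReal,
      Complex.norm_real, Real.norm_eq_abs, abs_of_pos (Real.Gamma_pos_of_pos (by norm_num)),
      Real.Gamma_one_half_eq, Real.sq_sqrt pi_pos.le]
  have hden : ‖Complex.Gamma z₂‖^2 * ‖Complex.Gamma (↑Δ:ℂ)‖^2 ≠ 0 := by
    apply mul_ne_zero <;> apply pow_ne_zero
    · simpa using hz₂ne
    · rw [hwΔ]; exact hΓΔpos.ne'
  have hT : Tendsto (fun n : ℕ => ‖Complex.GammaSeq z₁ n‖^2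
      * ‖Complex.GammaSeq ((1/2:ℂ)) n‖^2
      / (‖Complex.GammaSeq z₂ n‖^2 * ‖Complex.GammaSeq ((↑Δ:ℂ)) n‖^2))
      atTop (𝓝 (‖Complex.Gamma z₁‖^2 * ‖Complex.Gamma ((1/2:ℂ))‖^2
      / (‖Complex.Gamma z₂‖^2 * ‖Complex.Gamma ((↑Δ:ℂ))‖^2))) :=
    ((hAlim z₁).mul (hAlim _)).div ((hAlim z₂).mul (hAlim _)) hden
  have heq : ∀ n : ℕ, 1 ≤ n → ‖Complex.GammaSeq z₁ n‖^2
      * ‖Complex.GammaSeq ((1/2:ℂ)) n‖^2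
      / (‖Complex.GammaSeq z₂ n‖^2 * ‖Complex.GammaSeq ((↑Δ:ℂ)) n‖^2)
      = ∏ j ∈ Finset.range (n+1),
      ((((j:ℝ)+1/2)^2+y^2) * (((j:ℝ)+Δ)^2) / (((((j:ℝ)+Δ)^2+y^2)) * (((j:ℝ)+1/2)^2))) := by
    intro n hn
    rw [syk_absSq_GammaSeq z₁ n hn, syk_absSq_GammaSeq _ n hn, syk_absSq_GammaSeq _ n hn,
      syk_absSq_GammaSeq _ n hn]
    have hre₁ : z₁.re = Δ := by simp [hz₁]
    have hre₂ : z₂.re = 1/2 := by simp [hz₂]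
    have hre₃ : ((↑Δ:ℂ)).re = Δ := by simp
    have hre₄ : ((1/2:ℂ)).re = 1/2 := by norm_num
    rw [hre₁, hre₂, hre₃, hre₄]
    rw [Finset.prod_congr rfl (fun j _ => e₁ j), Finset.prod_congr rfl (fun j _ => e₂ j),
      Finset.prod_congr rfl (fun j _ => e₃ j), Finset.prod_congr rfl (fun j _ => e₄ j)]
    rw [Finset.prod_div_distrib, Finset.prod_mul_distrib, Finset.prod_mul_distrib]
    have hn' : (0:ℝ) < (n:ℝ) := by exact_mod_cast hn
    have hP₁ : 0 < ∏ j ∈ Finset.range (n+1), ((((j:ℝ)+Δ)^2+y^2)) :=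
      Finset.prod_pos fun j _ => by positivity
    have hP₂ : 0 < ∏ j ∈ Finset.range (n+1), ((((j:ℝ)+1/2)^2)) :=
      Finset.prod_pos fun j _ => by positivity
    have hP₃ : 0 < ∏ j ∈ Finset.range (n+1), ((((j:ℝ)+1/2)^2+y^2)) :=
      Finset.prod_pos fun j _ => by positivity
    have hP₄ : 0 < ∏ j ∈ Finset.range (n+1), ((((j:ℝ)+Δ)^2)) :=
      Finset.prod_pos fun j _ => by positivity
    have hE₁ : (0:ℝ) < ((n:ℝ) ^ Δ * (n.factorial:ℝ))^2 := by positivity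
    have hE₂ : (0:ℝ) < ((n:ℝ) ^ (1/2:ℝ) * (n.factorial:ℝ))^2 := by positivity
    field_simp
  have hval : ‖Complex.Gamma z₁‖^2 * ‖Complex.Gamma ((1/2:ℂ))‖^2
      / (‖Complex.Gamma z₂‖^2 * ‖Complex.Gamma ((↑Δ:ℂ))‖^2)
      = Real.cosh (π*y) * ‖Complex.Gamma z₁‖^2 / (Real.Gamma Δ)^2 := by
    rw [hw2, hwΔ, hz₂, syk_abs_Gamma_half y]
    have hcosh : (0:ℝ) < Real.cosh (π*y) := Real.cosh_pos _
    field_simp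
  rw [← hval]
  refine Filter.Tendsto.congr' ?_ hT
  filter_upwards [eventually_ge_atTop 1] with n hn
  exact heq n hn

lemma syk_log_q (Δ y : ℝ) (hΔ0 : 0 < Δ) (j : ℕ) :
    Real.log ((((j:ℝ)+1/2)^2+y^2) * (((j:ℝ)+Δ)^2) / (((((j:ℝ)+Δ)^2+y^2)) * (((j:ℝ)+1/2)^2)))
      = sykG y ((j:ℝ)+1/2) - sykG y ((j:ℝ)+Δ) := by
  have h1 : (0:ℝ) < (j:ℝ)+1/2 := by positivity
  have h2 : (0:ℝ) < (j:ℝ)+Δ := by positivity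
  rw [Real.log_div (by positivity) (by positivity),
    Real.log_mul (by positivity) (by positivity),
    Real.log_mul (by positivity) (by positivity),
    Real.log_pow, Real.log_pow]
  simp only [sykG]
  push_cast
  ring

lemma syk_main (Δ y : ℝ) (hΔ0 : 0 < Δ) (hΔ1 : Δ < 1/2) (hy : 1 ≤ |y|) :
    4*Δ^2*(8:ℝ)^((2*Δ-1)/2) * |y|^(2*Δ-1)
        ≤ Real.cosh (π*y) * ‖Complex.Gamma (↑Δ + Complex.I*↑y)‖^2
          / (Real.Gamma Δ)^2 ∧
      Real.cosh (π*y) * ‖Complex.Gamma (↑Δ + Complex.I*↑y)‖^2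
          / (Real.Gamma Δ)^2 ≤ |y|^(2*Δ-1) := by
  set c : ℝ := (1-2*Δ)/2 with hc
  have hc0 : 0 ≤ c := by rw [hc]; linarith
  have hy2 : (1:ℝ) ≤ y^2 := by nlinarith [_root_.sq_abs y, abs_nonneg y]
  set q : ℕ → ℝ := fun j =>
    ((((j:ℝ)+1/2)^2+y^2) * (((j:ℝ)+Δ)^2) / (((((j:ℝ)+Δ)^2+y^2)) * (((j:ℝ)+1/2)^2))) with hq
  have hqpos : ∀ j : ℕ, 0 < q j := by
    intro j
    have h2 : (0:ℝ) < (j:ℝ)+Δ := by positivity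
    rw [hq]
    positivity
  have hPpos : ∀ n : ℕ, 0 < ∏ j ∈ Finset.range (n+1), q j :=
    fun n => Finset.prod_pos fun j _ => hqpos j
  have hlog : ∀ n : ℕ, Real.log (∏ j ∈ Finset.range (n+1), q j)
      = -∑ j ∈ Finset.range (n+1), (sykG y ((j:ℝ)+Δ) - sykG y ((j:ℝ)+1/2)) := by
    intro n
    rw [Real.log_prod (fun j _ => (hqpos j).ne')]
    rw [← Finset.sum_neg_distrib]
    apply Finset.sum_congr rfl
    intro j _
    rw [hq]
    rw [syk_log_q Δ y hΔ0 j]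
    ring
  -- bounds for each n
  have hlow : ∀ n : ℕ, Real.exp (-((sykG y Δ - sykG y (1/2)) + c * sykG y (1/2)))
      ≤ ∏ j ∈ Finset.range (n+1), q j := by
    intro n
    rw [← Real.exp_log (hPpos n), hlog n]
    apply Real.exp_le_exp.mpr
    simp only [neg_le_neg_iff]
    exact syk_sum_upper Δ y hΔ0 hΔ1 n
  have hup : ∀ n : ℕ, ∏ j ∈ Finset.range (n+1), q j
      ≤ Real.exp (-(c * (sykG y 1 - sykG y ((n:ℝ)+2)))) := by
    intro n
    rw [← Real.exp_log (hPpos n), hlog n]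
    apply Real.exp_le_exp.mpr
    simp only [neg_le_neg_iff]
    exact syk_sum_lower Δ y hΔ0 hΔ1 n
  set L : ℝ := Real.cosh (π*y) * ‖Complex.Gamma (↑Δ + Complex.I*↑y)‖^2
    / (Real.Gamma Δ)^2 with hL
  have hT := syk_tendsto Δ y hΔ0 hΔ1
  -- lower bound on L
  have hLlow : Real.exp (-((sykG y Δ - sykG y (1/2)) + c * sykG y (1/2))) ≤ L :=
    ge_of_tendsto hT (Eventually.of_forall hlow)
  -- upper bound on L
  have hgn : Tendsto (fun n : ℕ => sykG y ((n:ℝ)+2)) atTop (𝓝 0) := by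
    have hform : ∀ n : ℕ, sykG y ((n:ℝ)+2) = Real.log (1 + y^2/((n:ℝ)+2)^2) := by
      intro n
      have hne : ((n:ℝ)+2) ≠ 0 := by positivity
      rw [sykG, show (((n:ℝ)+2)^2 + y^2) = (1 + y^2/((n:ℝ)+2)^2) * ((n:ℝ)+2)^2 by
        field_simp]
      rw [Real.log_mul (by positivity) (by positivity), Real.log_pow]
      push_cast
      ring
    simp only [hform]
    have hdiv : Tendsto (fun n : ℕ => y^2/((n:ℝ)+2)^2) atTop (𝓝 0) := by
      apply Tendsto.div_atTop tendsto_const_nhds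
      apply tendsto_atTop_mono (fun n : ℕ => by nlinarith [Nat.cast_nonneg (α := ℝ) n] :
        ∀ n : ℕ, (n:ℝ) ≤ ((n:ℝ)+2)^2)
      exact tendsto_natCast_atTop_atTop
    have := (Real.continuousAt_log (by norm_num : (1:ℝ) + 0 ≠ 0)).tendsto.comp
      (tendsto_const_nhds.add hdiv)
    simpa [Function.comp_def] using this
  have hRlim : Tendsto (fun n : ℕ => Real.exp (-(c * (sykG y 1 - sykG y ((n:ℝ)+2)))))
      atTop (𝓝 (Real.exp (-(c * sykG y 1)))) := by
    have h1 : Tendsto (fun n : ℕ => -(c * (sykG y 1 - sykG y ((n:ℝ)+2)))) atTop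
        (𝓝 (-(c * (sykG y 1 - 0)))) :=
      ((tendsto_const_nhds.sub hgn).const_mul c).neg
    rw [sub_zero] at h1
    exact (Real.continuous_exp.tendsto _).comp h1
  have hLup : L ≤ Real.exp (-(c * sykG y 1)) :=
    le_of_tendsto_of_tendsto' hT hRlim hup
  -- now convert to rpow bounds
  have hg1 : sykG y 1 = Real.log (1 + y^2) := by
    simp [sykG]
  have hgΔ : sykG y Δ = Real.log (Δ^2+y^2) - 2 * Real.log Δ := rfl
  have hghalf : sykG y (1/2) = Real.log (1 + 4*y^2) := by
    rw [sykG, show ((1:ℝ)/2)^2 + y^2 = (1 + 4*y^2) * (1/2)^2 by ring,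
      Real.log_mul (by positivity) (by positivity), Real.log_pow]
    push_cast
    ring
  constructor
  · -- lower bound
    refine le_trans ?_ hLlow
    have hd0 : sykG y Δ - sykG y (1/2) ≤ 2 * (Real.log (1/2) - Real.log Δ) := by
      rw [hgΔ, hghalf]
      have h1 : Real.log (Δ^2+y^2) ≤ Real.log ((1/2)^2+y^2) := by
        apply Real.log_le_log (by positivity)
        nlinarith
      have h2 : Real.log ((1/2)^2+y^2) - 2*Real.log (1/2) = Real.log (1+4*y^2) := by
        rw [show ((1:ℝ)/2)^2 + y^2 = (1 + 4*y^2) * (1/2)^2 by ring,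
          Real.log_mul (by positivity) (by positivity), Real.log_pow]
        push_cast
        ring
      linarith
    have hstep : Real.exp (-(2 * (Real.log (1/2) - Real.log Δ) + c * Real.log (1+4*y^2)))
        ≤ Real.exp (-((sykG y Δ - sykG y (1/2)) + c * sykG y (1/2))) := by
      apply Real.exp_le_exp.mpr
      rw [hghalf]
      linarith
    refine le_trans ?_ hstep
    rw [Real.exp_neg, Real.exp_add]
    have he1 : Real.exp (2 * (Real.log (1/2) - Real.log Δ)) = (1/4) / Δ^2 := by
      rw [show 2 * (Real.log (1/2) - Real.log Δ) = Real.log ((1/2)^2) - Real.log (Δ^2) by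
        rw [Real.log_pow, Real.log_pow]; push_cast; ring,
        Real.exp_sub, Real.exp_log (by positivity), Real.exp_log (by positivity)]
      norm_num
    have he2 : Real.exp (c * Real.log (1+4*y^2)) = (1+4*y^2) ^ c := by
      rw [Real.rpow_def_of_pos (by positivity)]
      ring_nf
    rw [he1, he2]
    rw [show ((1/4:ℝ)/Δ^2 * (1+4*y^2)^c)⁻¹ = 4*Δ^2 * ((1+4*y^2)^c)⁻¹ by
      field_simp]
    have hbase : (8:ℝ)^((2*Δ-1)/2) * |y|^(2*Δ-1) ≤ ((1+4*y^2)^c)⁻¹ := by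
      have h8 : (1:ℝ)+4*y^2 ≤ 8*y^2 := by nlinarith
      have hr1 : (1+4*y^2)^c ≤ (8*y^2)^c :=
        Real.rpow_le_rpow (by positivity) h8 hc0
      have hr2 : ((8*y^2:ℝ))^c = 8^c * (y^2)^c := Real.mul_rpow (by norm_num) (by positivity)
      have hinv : ((8*y^2:ℝ)^c)⁻¹ ≤ ((1+4*y^2)^c)⁻¹ := inv_anti₀ (by positivity) hr1
      have hkey : ((8*y^2:ℝ)^c)⁻¹ = 8^((2*Δ-1)/2) * |y|^(2*Δ-1) := by
        rw [hr2, mul_inv, ← Real.rpow_neg (by norm_num : (0:ℝ) ≤ 8),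
          ← Real.rpow_neg (by positivity : (0:ℝ) ≤ y^2)]
        congr 1
        · congr 1
          rw [hc]; ring
        · rw [show y^2 = |y|^(2:ℕ) by rw [_root_.sq_abs], ← Real.rpow_natCast |y| 2,
            ← Real.rpow_mul (abs_nonneg y)]
          congr 1
          rw [hc]; push_cast; ring
      rw [← hkey]
      exact hinv
    rw [show 4*Δ^2*(8:ℝ)^((2*Δ-1)/2) * |y|^(2*Δ-1)
        = 4*Δ^2*((8:ℝ)^((2*Δ-1)/2) * |y|^(2*Δ-1)) from by ring]
    exact mul_le_mul_of_nonneg_left hbase (by positivity)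
  · -- upper bound
    refine le_trans hLup ?_
    rw [hg1]
    have he : Real.exp (-(c * Real.log (1+y^2))) = ((1+y^2) ^ c)⁻¹ := by
      rw [Real.exp_neg, Real.rpow_def_of_pos (by positivity)]
      ring_nf
    rw [he]
    have hr1 : (y^2:ℝ)^c ≤ (1+y^2)^c := Real.rpow_le_rpow (by positivity) (by linarith) hc0
    have h1 : ((1+y^2:ℝ)^c)⁻¹ ≤ ((y^2:ℝ)^c)⁻¹ := by
      apply inv_anti₀ (by positivity) hr1
    refine le_trans h1 ?_
    have : ((y^2:ℝ)^c)⁻¹ = |y|^(2*Δ-1) := by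
      rw [← Real.rpow_neg (by positivity)]
      rw [show y^2 = |y|^(2:ℕ) by rw [_root_.sq_abs], ← Real.rpow_natCast |y| 2,
        ← Real.rpow_mul (abs_nonneg y)]
      norm_num
      congr 1; rw [hc]; ring
    rw [this]

/-- The conformal SYK spectral function `ρ(ω) = cosh(βω/2) |Γ(Δ + iωβ/(2π))|²` has
polynomial tails: `c₁ |ω|^{2Δ-1} ≤ ρ(ω) ≤ c₂ |ω|^{2Δ-1}` for large `|ω|`. -/
theorem stmt_9 (β Δ : ℝ) (hβ : 0 < β) (hΔ0 : 0 < Δ) (hΔ1 : Δ < 1 / 2) :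
    ∃ c₁ > (0 : ℝ), ∃ c₂ > (0 : ℝ), ∃ Ω > (0 : ℝ), ∀ ω : ℝ, Ω ≤ |ω| →
      c₁ * |ω| ^ (2 * Δ - 1)
        ≤ Real.cosh (β * ω / 2) *
            ‖Complex.Gamma (Δ + Complex.I * (ω * β / (2 * π)))‖ ^ 2 ∧
      Real.cosh (β * ω / 2) *
          ‖Complex.Gamma (Δ + Complex.I * (ω * β / (2 * π)))‖ ^ 2
        ≤ c₂ * |ω| ^ (2 * Δ - 1) := by
  have hΓ : 0 < Real.Gamma Δ := Real.Gamma_pos_of_pos hΔ0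
  have hπ : 0 < π := Real.pi_pos
  set k : ℝ := β/(2*π) with hk
  have hkpos : 0 < k := by positivity
  refine ⟨Real.Gamma Δ^2 * (4*Δ^2*(8:ℝ)^((2*Δ-1)/2)) * k^(2*Δ-1), by positivity,
    Real.Gamma Δ^2 * k^(2*Δ-1), by positivity, 2*π/β, by positivity, ?_⟩
  intro ω hω
  set y : ℝ := ω*β/(2*π) with hy'
  have hcosh : β*ω/2 = π*y := by rw [hy']; field_simp
  have harg : (↑Δ + Complex.I * (↑ω * ↑β / (2 * ↑π)) : ℂ) = ↑Δ + Complex.I*↑y := by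
    rw [hy']; push_cast; ring
  have hyabs : |y| = |ω| * k := by
    rw [hy', hk, abs_div, abs_mul, abs_of_pos hβ,
      abs_of_pos (by positivity : (0:ℝ) < 2*π)]
    ring
  have hy1 : 1 ≤ |y| := by
    rw [hyabs]
    calc (1:ℝ) = (2*π/β) * k := by rw [hk]; field_simp
    _ ≤ |ω| * k := mul_le_mul_of_nonneg_right hω hkpos.le
  obtain ⟨h1, h2⟩ := syk_main Δ y hΔ0 hΔ1 hy1
  have hrw : |y|^(2*Δ-1) = |ω|^(2*Δ-1) * k^(2*Δ-1) := by
    rw [hyabs, Real.mul_rpow (abs_nonneg ω) hkpos.le]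
  set A : ℝ := ‖Complex.Gamma (↑Δ + Complex.I*↑y)‖^2 with hA
  have hcancel : Real.Gamma Δ^2 * (Real.cosh (π*y) * A / (Real.Gamma Δ)^2)
      = Real.cosh (π*y) * A := by field_simp
  rw [hcosh, harg, ← hA]
  constructor
  · have := mul_le_mul_of_nonneg_left h1 (by positivity : (0:ℝ) ≤ Real.Gamma Δ^2)
    rw [hcancel] at this
    refine le_trans (le_of_eq ?_) this
    rw [hrw]
    ring
  · have := mul_le_mul_of_nonneg_left h2 (by positivity : (0:ℝ) ≤ Real.Gamma Δ^2)
    rw [hcancel] at this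
    refine le_trans this (le_of_eq ?_)
    rw [hrw]
    ring
end
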